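/- arXiv:2004.07781 — 2 statements merged into one kernel-verified Lean document; each statement's English description precedes it below -/
import Mathlib

section
/- Let A be a symmetric positive semidefinite block matrix A = [[L, X],[Xᵀ, M]] with L ∈ ℝ^{m×m}, M ∈ ℝ^{n×n}, X ∈ ℝ^{m×n}. Then ‖X‖_F² ≤ ‖L‖_F ‖M‖_F. -/
/-!
Factor `A = Bᵀ B` and split `B = [U V]` by columns, so that `L = UᵀU`, `X = UᵀV` and `M = VᵀV`.
Then `‖X‖_F² = tr (UUᵀ · VVᵀ) ≤ ‖UUᵀ‖_F ‖VVᵀ‖_F` by Cauchy–Schwarz, and cycling the trace gives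
`‖UUᵀ‖_F = ‖UᵀU‖_F = ‖L‖_F`, and likewise for `M`.
-/

open Matrix
open scoped ComplexOrder

namespace Matrix

variable {ι α β : Type*} [Fintype ι] [Fintype α] [Fintype β]

lemma sum_sq_eq_trace_mul_transpose (A : Matrix α β ℝ) :
    ∑ i, ∑ j, A i j ^ 2 = trace (A * Aᵀ) := by
  simp [trace, mul_apply, sq]

lemma trace_mul_le_sqrt_mul_sqrt (P : Matrix α β ℝ) (Q : Matrix β α ℝ) :
    trace (P * Q) ≤ √(∑ i, ∑ j, P i j ^ 2) * √(∑ i, ∑ j, Q i j ^ 2) := by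
  have hQ : ∑ i, ∑ j, Q i j ^ 2 = ∑ p : α × β, Q p.2 p.1 ^ 2 := by
    rw [Finset.sum_comm, Fintype.sum_prod_type]
  rw [hQ, ← Fintype.sum_prod_type' (fun i j => P i j ^ 2)]
  simpa [trace, mul_apply, Fintype.sum_prod_type] using
    Real.sum_mul_le_sqrt_mul_sqrt Finset.univ (fun p : α × β => P p.1 p.2) (fun p => Q p.2 p.1)

lemma sum_sq_transpose_mul_self (U : Matrix ι α ℝ) :
    ∑ i, ∑ j, (Uᵀ * U) i j ^ 2 = ∑ i, ∑ j, (U * Uᵀ) i j ^ 2 := by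
  simp only [sum_sq_eq_trace_mul_transpose, transpose_mul, transpose_transpose]
  rw [← Matrix.mul_assoc, trace_mul_comm]
  simp only [Matrix.mul_assoc]

theorem sum_sq_transpose_mul_le (U : Matrix ι α ℝ) (V : Matrix ι β ℝ) :
    ∑ i, ∑ j, (Uᵀ * V) i j ^ 2 ≤
      √(∑ i, ∑ j, (Uᵀ * U) i j ^ 2) * √(∑ i, ∑ j, (Vᵀ * V) i j ^ 2) := by
  have hcycle : trace ((Uᵀ * V) * (Uᵀ * V)ᵀ) = trace ((U * Uᵀ) * (V * Vᵀ)) := by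
    rw [transpose_mul, transpose_transpose, ← Matrix.mul_assoc, trace_mul_comm]
    simp only [Matrix.mul_assoc]
  rw [sum_sq_eq_trace_mul_transpose, hcycle, sum_sq_transpose_mul_self, sum_sq_transpose_mul_self]
  exact trace_mul_le_sqrt_mul_sqrt _ _

open scoped MatrixOrder Matrix.Norms.L2Operator in
lemma PosSemidef.exists_gram_of_fromBlocks {𝕜 : Type*} [RCLike 𝕜] [DecidableEq α] [DecidableEq β]
    {L : Matrix α α 𝕜} {X : Matrix α β 𝕜} {Y : Matrix β α 𝕜} {M : Matrix β β 𝕜}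
    (h : (fromBlocks L X Y M).PosSemidef) :
    ∃ (U : Matrix (α ⊕ β) α 𝕜) (V : Matrix (α ⊕ β) β 𝕜), L = Uᴴ * U ∧ X = Uᴴ * V ∧ M = Vᴴ * V := by
  obtain ⟨B, hB⟩ := CStarAlgebra.nonneg_iff_eq_star_mul_self.mp h.nonneg
  rw [star_eq_conjTranspose, ← fromCols_toCols B, conjTranspose_fromCols_eq_fromRows_conjTranspose,
    fromRows_mul_fromCols] at hB
  obtain ⟨hL, hX, -, hM⟩ := fromBlocks_inj.mp hB
  exact ⟨_, _, hL, hX, hM⟩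

end Matrix

/-- For a symmetric positive semidefinite block matrix `[[L, X], [Xᵀ, M]]`, the
off-diagonal block satisfies `‖X‖_F² ≤ ‖L‖_F ‖M‖_F`. -/
theorem stmt_11 (m n : ℕ) (L : Matrix (Fin m) (Fin m) ℝ) (M : Matrix (Fin n) (Fin n) ℝ)
    (X : Matrix (Fin m) (Fin n) ℝ)
    (h : (Matrix.fromBlocks L X X.transpose M).PosSemidef) :
    (∑ i, ∑ j, X i j ^ 2) ≤
      Real.sqrt (∑ i, ∑ j, L i j ^ 2) * Real.sqrt (∑ i, ∑ j, M i j ^ 2) := by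
  obtain ⟨U, V, rfl, rfl, rfl⟩ := h.exists_gram_of_fromBlocks
  simpa only [conjTranspose_eq_transpose_of_trivial] using sum_sq_transpose_mul_le U V
end

section
/- (Lasso error bound under restricted eigenvalue) In the setting of the preceding cone condition, suppose additionally that Γ̂ = n⁻¹ZᵀZ satisfies θᵀΓ̂θ ≥ τ₂‖θ‖₂² − τ₁‖θ‖₁² for all θ with τ₂ ≥ 32 τ₁ s, where s = |S| and on the cone ‖Δ‖₁ ≤ 4√s‖Δ‖_F. Then the minimizer's error satisfies ‖Δ‖_F ≤ 24 √s λ / τ₂ and ‖Δ‖₁ ≤ 96 s λ / τ₂. -/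
/-!
On the cone `‖Δ‖₁ ≤ 4√s ‖Δ‖₂` we have `‖Δ‖₁² ≤ 16 s ‖Δ‖₂²`, so `τ₂ ≥ 32 τ₁ s` turns the restricted
eigenvalue bound into the curvature bound `τ₂/2 ‖Δ‖₂² ≤ ΔᵀΓ̂Δ`. With the basic inequality and the cone
once more this gives `τ₂/2 ‖Δ‖₂² ≤ 12 √s λ ‖Δ‖₂`; dividing by `‖Δ‖₂` yields the `ℓ₂` bound, and the
cone converts it into the `ℓ₁` bound.
-/

open Matrix

lemma le_div_of_mul_sq_le_mul {a b x : ℝ} (ha : 0 < a) (hb : 0 ≤ b) (h : a * x ^ 2 ≤ b * x) :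
    x ≤ b / a := by
  rw [le_div_iff₀ ha]
  rcases le_or_gt x 0 with hx | hx
  · nlinarith
  · nlinarith

lemma mul_sq_le_half_mul_sq {τ₁ τ₂ c L F : ℝ} (hτ₂ : 0 ≤ τ₂) (hL : 0 ≤ L) (hLF : L ≤ c * F)
    (hτ : 2 * τ₁ * c ^ 2 ≤ τ₂) : τ₁ * L ^ 2 ≤ τ₂ / 2 * F ^ 2 := by
  rcases le_or_gt τ₁ 0 with hτ₁ | hτ₁
  · nlinarith [sq_nonneg L, sq_nonneg F]
  · have hLsq : L ^ 2 ≤ c ^ 2 * F ^ 2 := by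
      rw [← mul_pow]
      exact pow_le_pow_left₀ hL hLF 2
    nlinarith [mul_le_mul_of_nonneg_left hLsq hτ₁.le, sq_nonneg F]

lemma half_mul_sum_sq_le_dotProduct_mulVec {ι : Type*} [Fintype ι] (Γ : Matrix ι ι ℝ)
    (θ : ι → ℝ) {τ₁ τ₂ c : ℝ} (hτ₂ : 0 ≤ τ₂)
    (hRE : τ₂ * (∑ i, θ i ^ 2) - τ₁ * (∑ i, |θ i|) ^ 2 ≤ θ ⬝ᵥ Γ *ᵥ θ)
    (hcone : ∑ i, |θ i| ≤ c * Real.sqrt (∑ i, θ i ^ 2)) (hτ : 2 * τ₁ * c ^ 2 ≤ τ₂) :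
    τ₂ / 2 * ∑ i, θ i ^ 2 ≤ θ ⬝ᵥ Γ *ᵥ θ := by
  have hcurv := mul_sq_le_half_mul_sq hτ₂ (by positivity) hcone hτ
  rw [Real.sq_sqrt (by positivity)] at hcurv
  linarith

theorem stmt_14_general (N : ℕ) (Γhat : Matrix (Fin N) (Fin N) ℝ) (S : Finset (Fin N))
    (Δ : Fin N → ℝ) (τ₁ τ₂ lam : ℝ)
    (hτ₂ : 0 < τ₂) (hlam : 0 ≤ lam)
    (hRE : ∀ θ : Fin N → ℝ,
      τ₂ * (∑ i, θ i ^ 2) - τ₁ * (∑ i, |θ i|) ^ 2 ≤ θ ⬝ᵥ Γhat.mulVec θ)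
    (hτ : 32 * τ₁ * (S.card : ℝ) ≤ τ₂)
    (hcone : ∑ i, |Δ i| ≤ 4 * Real.sqrt (S.card : ℝ) * Real.sqrt (∑ i, Δ i ^ 2))
    (hbasic : (1 / 2 : ℝ) * (Δ ⬝ᵥ Γhat.mulVec Δ) ≤ (3 * lam / 2) * ∑ i ∈ S, |Δ i|) :
    Real.sqrt (∑ i, Δ i ^ 2) ≤ 24 * Real.sqrt (S.card : ℝ) * lam / τ₂ ∧
      ∑ i, |Δ i| ≤ 96 * (S.card : ℝ) * lam / τ₂ := by
  set r := Real.sqrt (S.card : ℝ)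
  set F := Real.sqrt (∑ i, Δ i ^ 2)
  have hr : r ^ 2 = S.card := Real.sq_sqrt (Nat.cast_nonneg _)
  have hτ' : 2 * τ₁ * (4 * r) ^ 2 ≤ τ₂ := by rw [mul_pow, hr]; linarith
  have hquad : τ₂ / 2 * F ^ 2 ≤ 12 * r * lam * F := calc
    τ₂ / 2 * F ^ 2 = τ₂ / 2 * ∑ i, Δ i ^ 2 := by rw [Real.sq_sqrt (by positivity)]
    _ ≤ Δ ⬝ᵥ Γhat *ᵥ Δ :=
      half_mul_sum_sq_le_dotProduct_mulVec Γhat Δ hτ₂.le (hRE Δ) hcone hτ'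
    _ ≤ 3 * lam * ∑ i ∈ S, |Δ i| := by linarith
    _ ≤ 3 * lam * ∑ i, |Δ i| := by gcongr; exact S.subset_univ
    _ ≤ 3 * lam * (4 * r * F) := by gcongr
    _ = 12 * r * lam * F := by ring
  have hF : F ≤ 24 * r * lam / τ₂ :=
    (le_div_of_mul_sq_le_mul (by positivity) (by positivity) hquad).trans_eq (by ring)
  refine ⟨hF, ?_⟩
  calc ∑ i, |Δ i| ≤ 4 * r * F := hcone
    _ ≤ 4 * r * (24 * r * lam / τ₂) := by gcongr
    _ = 96 * (S.card : ℝ) * lam / τ₂ := by rw [← hr]; ring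

/-- Lasso error bound under a restricted eigenvalue condition: if `Γ̂` satisfies
`θᵀΓ̂θ ≥ τ₂‖θ‖₂² − τ₁‖θ‖₁²` for all `θ`, with `τ₂ ≥ 32 τ₁ s` where `s = |S|`, the error
`Δ` lies in the cone `‖Δ‖₁ ≤ 4√s ‖Δ‖₂`, and the basic inequality
`(1/2) ΔᵀΓ̂Δ ≤ (3λ/2) ‖Δ_S‖₁` holds, then `‖Δ‖₂ ≤ 24 √s λ / τ₂` and
`‖Δ‖₁ ≤ 96 s λ / τ₂`. -/
theorem stmt_14 (N : ℕ) (Γhat : Matrix (Fin N) (Fin N) ℝ) (S : Finset (Fin N))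
    (Δ : Fin N → ℝ) (τ₁ τ₂ lam : ℝ)
    (hτ₁ : 0 ≤ τ₁) (hτ₂ : 0 < τ₂) (hlam : 0 ≤ lam)
    (hRE : ∀ θ : Fin N → ℝ,
      τ₂ * (∑ i, θ i ^ 2) - τ₁ * (∑ i, |θ i|) ^ 2 ≤ θ ⬝ᵥ Γhat.mulVec θ)
    (hτ : 32 * τ₁ * (S.card : ℝ) ≤ τ₂)
    (hcone : ∑ i, |Δ i| ≤ 4 * Real.sqrt (S.card : ℝ) * Real.sqrt (∑ i, Δ i ^ 2))
    (hbasic : (1 / 2 : ℝ) * (Δ ⬝ᵥ Γhat.mulVec Δ) ≤ (3 * lam / 2) * ∑ i ∈ S, |Δ i|) :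
    Real.sqrt (∑ i, Δ i ^ 2) ≤ 24 * Real.sqrt (S.card : ℝ) * lam / τ₂ ∧
      ∑ i, |Δ i| ≤ 96 * (S.card : ℝ) * lam / τ₂ :=
  stmt_14_general N Γhat S Δ τ₁ τ₂ lam hτ₂ hlam hRE hτ hcone hbasic
end
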